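/- Let (u, λ, f) be a real Dirichlet quasimode datum on the stadium S, and let a, b : ℝ² → ℝ be smooth on a neighborhood of S. Define the vector field A by A v = a ∂_x v + b ∂_y v, its divergence div A = ∂_x a + ∂_y b, and the commutator [Δ − λ², A] v = Δ(A v) − A(Δ v) (the λ² terms cancel). Then ⟨u, [Δ − λ², A] u⟩_{L²(S)} = ⟨2 A u + (div A) u, f⟩_{L²(S)} + ∫_{∂S} (∂_N u)(A u) dl. -/

import Mathlib

open MeasureTheory Real Set Filter

noncomputable section

/-- Partial derivative in the first (x) variable. -/
def pdx (u : ℝ × ℝ → ℝ) (p : ℝ × ℝ) : ℝ := deriv (fun t => u (t, p.2)) p.1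

/-- Partial derivative in the second (y) variable. -/
def pdy (u : ℝ × ℝ → ℝ) (p : ℝ × ℝ) : ℝ := deriv (fun t => u (p.1, t)) p.2

/-- The positive Laplacian `Δu = -u_xx - u_yy`. -/
def lap (u : ℝ × ℝ → ℝ) (p : ℝ × ℝ) : ℝ := -(pdx (pdx u) p) - (pdy (pdy u) p)

/-- The central rectangle `R = [-α,α] × [-β,β]`. -/
def Rect (α β : ℝ) : Set (ℝ × ℝ) := Icc (-α) α ×ˢ Icc (-β) β

/-- The wings `W = W₊ ∪ W₋`, two half-discs of radius β centered at `(±α, 0)`. -/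
def Wings (α β : ℝ) : Set (ℝ × ℝ) :=
  {p | (p.1 - α) ^ 2 + p.2 ^ 2 ≤ β ^ 2 ∧ α ≤ p.1} ∪
  {p | (p.1 + α) ^ 2 + p.2 ^ 2 ≤ β ^ 2 ∧ p.1 ≤ -α}

/-- The Bunimovich stadium `S = R ∪ W`. -/
def Stadium (α β : ℝ) : Set (ℝ × ℝ) := Rect α β ∪ Wings α β

/-- The boundary `∂S`: two horizontal segments and two semicircles. -/
def StadiumBoundary (α β : ℝ) : Set (ℝ × ℝ) :=
  {p | |p.1| ≤ α ∧ (p.2 = β ∨ p.2 = -β)} ∪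
  {p | (|p.1| - α) ^ 2 + p.2 ^ 2 = β ^ 2 ∧ α ≤ |p.1|}

/-- Boundary integral `∫_{∂S} g dl` of an integrand `g` depending on the boundary point
and the outward unit normal at that point. -/
def bdryInt (α β : ℝ) (g : ℝ × ℝ → ℝ × ℝ → ℝ) : ℝ :=
  (∫ x in (-α)..α, (g (x, β) (0, 1) + g (x, -β) (0, -1))) +
  β * ∫ θ in (-(π / 2))..(π / 2),
    (g (α + β * cos θ, β * sin θ) (cos θ, sin θ) +
     g (-(α + β * cos θ), β * sin θ) (-cos θ, sin θ))

/-- Boundary integral `∫_{∂S ∩ W} g dl` over the two semicircles only. -/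
def bdryIntW (α β : ℝ) (g : ℝ × ℝ → ℝ × ℝ → ℝ) : ℝ :=
  β * ∫ θ in (-(π / 2))..(π / 2),
    (g (α + β * cos θ, β * sin θ) (cos θ, sin θ) +
     g (-(α + β * cos θ), β * sin θ) (-cos θ, sin θ))

/-- The normal derivative `∂_N u = n₁ ∂_x u + n₂ ∂_y u` at a boundary point `p`
with outward unit normal `n`. -/
def nderiv (u : ℝ × ℝ → ℝ) (p n : ℝ × ℝ) : ℝ := n.1 * pdx u p + n.2 * pdy u p

/-- A real Dirichlet quasimode datum `(u, λ, f)` on the stadium: `λ > 0`, `u` smooth on a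
neighborhood of `S`, `u = 0` on `∂S`, and `(Δ - λ²) u = f` on `S`. -/
structure QMDatum (α β : ℝ) where
  u : ℝ × ℝ → ℝ
  lam : ℝ
  f : ℝ × ℝ → ℝ
  lam_pos : 0 < lam
  smooth : ∃ V : Set (ℝ × ℝ), IsOpen V ∧ Stadium α β ⊆ V ∧ ContDiffOn ℝ (⊤ : ℕ∞) u V
  dirichlet : ∀ p ∈ StadiumBoundary α β, u p = 0
  eqn : ∀ p ∈ Stadium α β, lap u p - lam ^ 2 * u p = f p

namespace Stmt6


lemma hasDerivAt_x {F : ℝ × ℝ → ℝ} {p : ℝ × ℝ} (hF : DifferentiableAt ℝ F p) :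
    HasDerivAt (fun t => F (t, p.2)) (pdx F p) p.1 := by
  have hc : DifferentiableAt ℝ (fun t : ℝ => ((t, p.2) : ℝ × ℝ)) p.1 :=
    (differentiableAt_id.prodMk (differentiableAt_const _))
  have h2 : DifferentiableAt ℝ (fun t => F (t, p.2)) p.1 := hF.comp p.1 hc
  exact h2.hasDerivAt

lemma hasDerivAt_y {F : ℝ × ℝ → ℝ} {p : ℝ × ℝ} (hF : DifferentiableAt ℝ F p) :
    HasDerivAt (fun t => F (p.1, t)) (pdy F p) p.2 := by
  have hc : DifferentiableAt ℝ (fun t : ℝ => ((p.1, t) : ℝ × ℝ)) p.2 :=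
    ((differentiableAt_const _).prodMk differentiableAt_id)
  have h2 : DifferentiableAt ℝ (fun t => F (p.1, t)) p.2 := hF.comp p.2 hc
  exact h2.hasDerivAt

variable {F G : ℝ × ℝ → ℝ} {p : ℝ × ℝ}

lemma pdx_mul (hF : DifferentiableAt ℝ F p) (hG : DifferentiableAt ℝ G p) :
    pdx (fun q => F q * G q) p = pdx F p * G p + F p * pdx G p :=
  ((hasDerivAt_x hF).mul (hasDerivAt_x hG)).deriv

lemma pdy_mul (hF : DifferentiableAt ℝ F p) (hG : DifferentiableAt ℝ G p) :
    pdy (fun q => F q * G q) p = pdy F p * G p + F p * pdy G p :=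
  ((hasDerivAt_y hF).mul (hasDerivAt_y hG)).deriv

lemma pdx_add (hF : DifferentiableAt ℝ F p) (hG : DifferentiableAt ℝ G p) :
    pdx (fun q => F q + G q) p = pdx F p + pdx G p :=
  ((hasDerivAt_x hF).add (hasDerivAt_x hG)).deriv

lemma pdy_add (hF : DifferentiableAt ℝ F p) (hG : DifferentiableAt ℝ G p) :
    pdy (fun q => F q + G q) p = pdy F p + pdy G p :=
  ((hasDerivAt_y hF).add (hasDerivAt_y hG)).deriv

lemma pdx_sub (hF : DifferentiableAt ℝ F p) (hG : DifferentiableAt ℝ G p) :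
    pdx (fun q => F q - G q) p = pdx F p - pdx G p :=
  ((hasDerivAt_x hF).sub (hasDerivAt_x hG)).deriv

lemma pdy_sub (hF : DifferentiableAt ℝ F p) (hG : DifferentiableAt ℝ G p) :
    pdy (fun q => F q - G q) p = pdy F p - pdy G p :=
  ((hasDerivAt_y hF).sub (hasDerivAt_y hG)).deriv

lemma pdx_neg (hF : DifferentiableAt ℝ F p) :
    pdx (fun q => -F q) p = -pdx F p := (hasDerivAt_x hF).neg.deriv

lemma pdy_neg (hF : DifferentiableAt ℝ F p) :
    pdy (fun q => -F q) p = -pdy F p := (hasDerivAt_y hF).neg.deriv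

lemma pdx_const_mul (c : ℝ) (hF : DifferentiableAt ℝ F p) :
    pdx (fun q => c * F q) p = c * pdx F p := ((hasDerivAt_x hF).const_mul c).deriv

lemma pdy_const_mul (c : ℝ) (hF : DifferentiableAt ℝ F p) :
    pdy (fun q => c * F q) p = c * pdy F p := ((hasDerivAt_y hF).const_mul c).deriv

variable {V : Set (ℝ × ℝ)}

lemma diffAt (hV : IsOpen V) (hF : ContDiffOn ℝ (⊤ : ℕ∞) F V) (hp : p ∈ V) :
    DifferentiableAt ℝ F p :=
  (hF.contDiffAt (hV.mem_nhds hp)).differentiableAt (by simp)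

lemma pdx_eq_fderiv (hF : DifferentiableAt ℝ F p) :
    pdx F p = fderiv ℝ F p (1, 0) := by
  have hc : HasDerivAt (fun t : ℝ => ((t, p.2) : ℝ × ℝ)) ((1 : ℝ), (0 : ℝ)) p.1 :=
    (hasDerivAt_id _).prodMk (hasDerivAt_const _ _)
  exact (hF.hasFDerivAt.comp_hasDerivAt p.1 hc).deriv

lemma pdy_eq_fderiv (hF : DifferentiableAt ℝ F p) :
    pdy F p = fderiv ℝ F p (0, 1) := by
  have hc : HasDerivAt (fun t : ℝ => ((p.1, t) : ℝ × ℝ)) ((0 : ℝ), (1 : ℝ)) p.2 :=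
    (hasDerivAt_const _ _).prodMk (hasDerivAt_id _)
  exact (hF.hasFDerivAt.comp_hasDerivAt p.2 hc).deriv

lemma contDiffOn_pdx (hV : IsOpen V) (hF : ContDiffOn ℝ (⊤ : ℕ∞) F V) :
    ContDiffOn ℝ (⊤ : ℕ∞) (pdx F) V := by
  have h1 : ContDiffOn ℝ (⊤ : ℕ∞) (fun q => fderiv ℝ F q (1, 0)) V :=
    (hF.fderiv_of_isOpen hV (by simp)).clm_apply contDiffOn_const
  exact h1.congr fun q hq => pdx_eq_fderiv (diffAt hV hF hq)

lemma contDiffOn_pdy (hV : IsOpen V) (hF : ContDiffOn ℝ (⊤ : ℕ∞) F V) :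
    ContDiffOn ℝ (⊤ : ℕ∞) (pdy F) V := by
  have h1 : ContDiffOn ℝ (⊤ : ℕ∞) (fun q => fderiv ℝ F q (0, 1)) V :=
    (hF.fderiv_of_isOpen hV (by simp)).clm_apply contDiffOn_const
  exact h1.congr fun q hq => pdy_eq_fderiv (diffAt hV hF hq)



lemma sq_le_iff_mem (t c : ℝ) (hc : 0 ≤ c) :
    t ^ 2 ≤ c ↔ t ∈ Icc (-Real.sqrt c) (Real.sqrt c) := by
  rw [mem_Icc]
  constructor
  · intro h
    exact abs_le_of_sq_le_sq' (by rwa [Real.sq_sqrt hc]) (Real.sqrt_nonneg c)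
  · rintro ⟨h1, h2⟩
    calc t ^ 2 ≤ Real.sqrt c ^ 2 := sq_le_sq' h1 h2
    _ = c := Real.sq_sqrt hc

def WP (α β : ℝ) : Set (ℝ × ℝ) := {p | (p.1 - α) ^ 2 + p.2 ^ 2 ≤ β ^ 2 ∧ α ≤ p.1}
def WM (α β : ℝ) : Set (ℝ × ℝ) := {p | (p.1 + α) ^ 2 + p.2 ^ 2 ≤ β ^ 2 ∧ p.1 ≤ -α}

lemma wings_eq (α β : ℝ) : Wings α β = WP α β ∪ WM α β := rfl

variable {α β : ℝ}

lemma sliceX_stadium (hα : 0 < α) (hβ : 0 < β) (y : ℝ) :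
    {x : ℝ | (x, y) ∈ Stadium α β} =
      if y ∈ Icc (-β) β then
        Icc (-(α + Real.sqrt (β ^ 2 - y ^ 2))) (α + Real.sqrt (β ^ 2 - y ^ 2)) else ∅ := by
  split_ifs with hy
  · rw [mem_Icc] at hy
    have hyy : y ^ 2 ≤ β ^ 2 := sq_le_sq' (by linarith) hy.2
    set s := Real.sqrt (β ^ 2 - y ^ 2) with hs
    have hs0 : 0 ≤ s := Real.sqrt_nonneg _
    have hs2 : s ^ 2 = β ^ 2 - y ^ 2 := Real.sq_sqrt (by linarith)
    ext x
    simp only [Stadium, Rect, Wings, mem_setOf_eq, mem_union, mem_prod, mem_Icc]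
    constructor
    · rintro (⟨⟨h1, h2⟩, _⟩ | ⟨h1, h2⟩ | ⟨h1, h2⟩)
      · constructor <;> linarith
      · have : (x - α) ^ 2 ≤ s ^ 2 := by linarith
        have := abs_le_of_sq_le_sq' this hs0
        constructor <;> linarith [this.1, this.2]
      · have : (x + α) ^ 2 ≤ s ^ 2 := by linarith
        have := abs_le_of_sq_le_sq' this hs0
        constructor <;> linarith [this.1, this.2]
    · rintro ⟨h1, h2⟩
      rcases le_or_gt x α with hxa | hxa
      · rcases le_or_gt (-α) x with hxb | hxb
        · exact Or.inl ⟨⟨hxb, hxa⟩, hy.1, hy.2⟩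
        · refine Or.inr (Or.inr ⟨?_, by linarith⟩)
          have hb1 : -s ≤ x + α := by linarith
          have hb2 : x + α ≤ s := by linarith
          have := sq_le_sq' hb1 hb2
          linarith [this, hs2]
      · refine Or.inr (Or.inl ⟨?_, by linarith⟩)
        have hb1 : -s ≤ x - α := by linarith
        have hb2 : x - α ≤ s := by linarith
        have := sq_le_sq' hb1 hb2
        linarith [this, hs2]
  · ext x
    simp only [Stadium, Rect, Wings, mem_setOf_eq, mem_union, mem_prod, mem_Icc,
      mem_empty_iff_false, iff_false]
    rw [mem_Icc] at hy
    push_neg at hy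
    rintro (⟨_, h1, h2⟩ | ⟨h1, _⟩ | ⟨h1, _⟩)
    · rcases lt_or_ge y (-β) with h | h
      · linarith
      · linarith [hy h]
    · have : y ^ 2 ≤ β ^ 2 := by nlinarith [sq_nonneg (x - α)]
      have := abs_le_of_sq_le_sq' this hβ.le
      rcases lt_or_ge y (-β) with h | h
      · linarith [this.1]
      · linarith [hy h, this.2]
    · have : y ^ 2 ≤ β ^ 2 := by nlinarith [sq_nonneg (x + α)]
      have := abs_le_of_sq_le_sq' this hβ.le
      rcases lt_or_ge y (-β) with h | h
      · linarith [this.1]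
      · linarith [hy h, this.2]

lemma sliceY_rect (x : ℝ) :
    {y : ℝ | (x, y) ∈ Rect α β} = if x ∈ Icc (-α) α then Icc (-β) β else ∅ := by
  split_ifs with hx
  · ext y; rw [mem_Icc] at hx; simp [Rect, hx.1, hx.2, mem_Icc]
  · ext y
    simp only [Rect, mem_setOf_eq, mem_prod, mem_Icc, mem_empty_iff_false, iff_false]
    rw [mem_Icc] at hx
    push_neg at hx
    rintro ⟨⟨h1, h2⟩, _⟩
    rcases lt_or_ge x (-α) with h | h
    · linarith
    · linarith [hx h]

lemma sliceY_wp (hβ : 0 < β) (x : ℝ) :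
    {y : ℝ | (x, y) ∈ WP α β} =
      if x ∈ Icc α (α + β) then
        Icc (-Real.sqrt (β ^ 2 - (x - α) ^ 2)) (Real.sqrt (β ^ 2 - (x - α) ^ 2)) else ∅ := by
  split_ifs with hx
  · rw [mem_Icc] at hx
    have hxx : (x - α) ^ 2 ≤ β ^ 2 := sq_le_sq' (by linarith) (by linarith)
    ext y
    simp only [WP, mem_setOf_eq]
    rw [← sq_le_iff_mem y _ (by linarith)]
    constructor
    · rintro ⟨h, _⟩; linarith
    · intro h; exact ⟨by linarith, hx.1⟩
  · ext y
    simp only [WP, mem_setOf_eq, mem_empty_iff_false, iff_false]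
    rw [mem_Icc] at hx
    push_neg at hx
    rintro ⟨h1, h2⟩
    have hx2 := hx h2
    nlinarith [sq_nonneg y]

lemma sliceY_wm (hβ : 0 < β) (x : ℝ) :
    {y : ℝ | (x, y) ∈ WM α β} =
      if x ∈ Icc (-(α + β)) (-α) then
        Icc (-Real.sqrt (β ^ 2 - (x + α) ^ 2)) (Real.sqrt (β ^ 2 - (x + α) ^ 2)) else ∅ := by
  split_ifs with hx
  · rw [mem_Icc] at hx
    have hxx : (x + α) ^ 2 ≤ β ^ 2 := sq_le_sq' (by linarith) (by linarith)
    ext y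
    simp only [WM, mem_setOf_eq]
    rw [← sq_le_iff_mem y _ (by linarith)]
    constructor
    · rintro ⟨h, _⟩; linarith
    · intro h; exact ⟨by linarith, hx.2⟩
  · ext y
    simp only [WM, mem_setOf_eq, mem_empty_iff_false, iff_false]
    rw [mem_Icc] at hx
    push_neg at hx
    rintro ⟨h1, h2⟩
    rcases lt_or_ge x (-(α + β)) with h | h
    · nlinarith [sq_nonneg y]
    · nlinarith [hx h, sq_nonneg y]

lemma isClosed_wp : IsClosed (WP α β) := by
  rw [show WP α β = {p : ℝ × ℝ | (p.1 - α) ^ 2 + p.2 ^ 2 ≤ β ^ 2} ∩ {p : ℝ × ℝ | α ≤ p.1}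
    from rfl]
  exact (isClosed_le (by continuity) continuous_const).inter
    (isClosed_le continuous_const continuous_fst)

lemma isClosed_wm : IsClosed (WM α β) := by
  rw [show WM α β = {p : ℝ × ℝ | (p.1 + α) ^ 2 + p.2 ^ 2 ≤ β ^ 2} ∩ {p : ℝ × ℝ | p.1 ≤ -α}
    from rfl]
  exact (isClosed_le (by continuity) continuous_const).inter
    (isClosed_le continuous_fst continuous_const)

lemma isClosed_stadium : IsClosed (Stadium α β) :=
  ((isClosed_Icc.prod isClosed_Icc).union (isClosed_wp.union isClosed_wm))

lemma stadium_subset (hα : 0 < α) (hβ : 0 < β) :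
    Stadium α β ⊆ Icc (-(α + β)) (α + β) ×ˢ Icc (-β) β := by
  rintro ⟨x, y⟩ h
  have := sliceX_stadium hα hβ (α := α) (β := β) y
  have hx : x ∈ {x : ℝ | (x, y) ∈ Stadium α β} := h
  rw [this] at hx
  split_ifs at hx with hy
  · rw [mem_Icc] at hx
    have hs : Real.sqrt (β ^ 2 - y ^ 2) ≤ β := by
      have := Real.sqrt_le_sqrt (show β ^ 2 - y ^ 2 ≤ β ^ 2 by nlinarith [sq_nonneg y])
      rwa [Real.sqrt_sq hβ.le] at this
    constructor
    · rw [mem_Icc]; constructor <;> linarith [hx.1, hx.2]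
    · exact hy
  · exact absurd hx (notMem_empty x)

lemma isCompact_stadium (hα : 0 < α) (hβ : 0 < β) : IsCompact (Stadium α β) :=
  (isCompact_Icc.prod isCompact_Icc).of_isClosed_subset isClosed_stadium
    (stadium_subset hα hβ)

lemma measurableSet_stadium : MeasurableSet (Stadium α β) :=
  isClosed_stadium.measurableSet



lemma indicator_comp_left (D : Set (ℝ × ℝ)) (F : ℝ × ℝ → ℝ) (y : ℝ) :
    (fun x => D.indicator F (x, y)) = ({x | (x, y) ∈ D}).indicator (fun x => F (x, y)) := by
  ext x
  by_cases h : (x, y) ∈ D <;> simp [Set.indicator_apply, h]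

lemma indicator_comp_right (D : Set (ℝ × ℝ)) (F : ℝ × ℝ → ℝ) (x : ℝ) :
    (fun y => D.indicator F (x, y)) = ({y | (x, y) ∈ D}).indicator (fun y => F (x, y)) := by
  ext y
  by_cases h : (x, y) ∈ D <;> simp [Set.indicator_apply, h]

/-- Fubini with slices in the x-direction (inner integral over x, outer over y). -/
lemma integral_xslices {D : Set (ℝ × ℝ)} (hD : MeasurableSet D) {F : ℝ × ℝ → ℝ}
    (hF : IntegrableOn F D) {c d : ℝ} {φ ψ : ℝ → ℝ}
    (hslice : ∀ y : ℝ, {x | (x, y) ∈ D} = if y ∈ Icc c d then Icc (φ y) (ψ y) else ∅) :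
    ∫ p in D, F p = ∫ y in Icc c d, ∫ x in Icc (φ y) (ψ y), F (x, y) := by
  have hI : Integrable (D.indicator F) := (integrable_indicator_iff hD).2 hF
  rw [← integral_indicator hD]
  rw [Measure.volume_eq_prod] at hI ⊢
  rw [MeasureTheory.integral_prod_symm _ hI]
  have key : ∀ y : ℝ, (∫ x, D.indicator F (x, y)) =
      (Icc c d).indicator (fun y => ∫ x in Icc (φ y) (ψ y), F (x, y)) y := by
    intro y
    rw [indicator_comp_left]
    rw [hslice y]
    split_ifs with hy
    · rw [integral_indicator measurableSet_Icc, Set.indicator_of_mem hy]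
    · simp [Set.indicator_of_notMem hy]
  rw [show (fun y => ∫ x, D.indicator F (x, y)) = _ from funext key,
    integral_indicator measurableSet_Icc]

/-- Fubini with slices in the y-direction (inner integral over y, outer over x). -/
lemma integral_yslices {D : Set (ℝ × ℝ)} (hD : MeasurableSet D) {F : ℝ × ℝ → ℝ}
    (hF : IntegrableOn F D) {c d : ℝ} {φ ψ : ℝ → ℝ}
    (hslice : ∀ x : ℝ, {y | (x, y) ∈ D} = if x ∈ Icc c d then Icc (φ x) (ψ x) else ∅) :
    ∫ p in D, F p = ∫ x in Icc c d, ∫ y in Icc (φ x) (ψ x), F (x, y) := by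
  have hI : Integrable (D.indicator F) := (integrable_indicator_iff hD).2 hF
  rw [← integral_indicator hD]
  rw [Measure.volume_eq_prod] at hI ⊢
  rw [MeasureTheory.integral_prod _ hI]
  have key : ∀ x : ℝ, (∫ y, D.indicator F (x, y)) =
      (Icc c d).indicator (fun x => ∫ y in Icc (φ x) (ψ x), F (x, y)) x := by
    intro x
    rw [indicator_comp_right]
    rw [hslice x]
    split_ifs with hx
    · rw [integral_indicator measurableSet_Icc, Set.indicator_of_mem hx]
    · simp [Set.indicator_of_notMem hx]
  rw [show (fun x => ∫ y, D.indicator F (x, y)) = _ from funext key,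
    integral_indicator measurableSet_Icc]

lemma volume_vline (c : ℝ) : (volume : Measure (ℝ × ℝ)) {p | p.1 = c} = 0 := by
  have : {p : ℝ × ℝ | p.1 = c} = ({c} : Set ℝ) ×ˢ (univ : Set ℝ) := by
    ext p
    simp only [mem_setOf_eq, Set.mem_prod, Set.mem_singleton_iff, Set.mem_univ, and_true]
  rw [this, Measure.volume_eq_prod, Measure.prod_prod]
  simp




variable {V : Set (ℝ × ℝ)} {P : ℝ × ℝ → ℝ}

lemma ftc_x (hV : IsOpen V) (hP : ContDiffOn ℝ (⊤ : ℕ∞) P V) {y e f : ℝ} (hef : e ≤ f)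
    (hsub : ∀ x ∈ Icc e f, (x, y) ∈ V) :
    ∫ x in Icc e f, pdx P (x, y) = P (f, y) - P (e, y) := by
  rw [MeasureTheory.integral_Icc_eq_integral_Ioc, ← intervalIntegral.integral_of_le hef]
  apply intervalIntegral.integral_eq_sub_of_hasDerivAt
  · intro x hx
    rw [uIcc_of_le hef] at hx
    exact hasDerivAt_x (diffAt hV hP (hsub x hx))
  · apply ContinuousOn.intervalIntegrable
    rw [uIcc_of_le hef]
    exact (contDiffOn_pdx hV hP).continuousOn.comp
      (Continuous.continuousOn (by continuity)) (fun x hx => hsub x hx)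

lemma ftc_y (hV : IsOpen V) (hP : ContDiffOn ℝ (⊤ : ℕ∞) P V) {x e f : ℝ} (hef : e ≤ f)
    (hsub : ∀ y ∈ Icc e f, (x, y) ∈ V) :
    ∫ y in Icc e f, pdy P (x, y) = P (x, f) - P (x, e) := by
  rw [MeasureTheory.integral_Icc_eq_integral_Ioc, ← intervalIntegral.integral_of_le hef]
  apply intervalIntegral.integral_eq_sub_of_hasDerivAt
  · intro y hy
    rw [uIcc_of_le hef] at hy
    exact hasDerivAt_y (diffAt hV hP (hsub y hy))
  · apply ContinuousOn.intervalIntegrable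
    rw [uIcc_of_le hef]
    exact (contDiffOn_pdy hV hP).continuousOn.comp
      (Continuous.continuousOn (by continuity)) (fun y hy => hsub y hy)

variable {β : ℝ}

lemma subst_sin (hβ : 0 < β) {f : ℝ → ℝ} (hf : ContinuousOn f (Icc (-β) β)) :
    ∫ y in (-β)..β, f y = ∫ θ in (-(π/2))..(π/2), (β * cos θ) * f (β * sin θ) := by
  have hderiv : ∀ θ ∈ uIcc (-(π/2)) (π/2),
      HasDerivAt (fun θ => β * sin θ) (β * cos θ) θ := fun θ _ =>
    (Real.hasDerivAt_sin θ).const_mul β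
  have hcont : ContinuousOn (fun θ => β * cos θ) (uIcc (-(π/2)) (π/2)) :=
    (continuous_const.mul Real.continuous_cos).continuousOn
  have hg : ContinuousOn f ((fun θ => β * sin θ) '' uIcc (-(π/2)) (π/2)) := by
    apply hf.mono
    rintro _ ⟨θ, _, rfl⟩
    show β * sin θ ∈ Icc (-β) β
    rw [mem_Icc]
    constructor
    · nlinarith [Real.neg_one_le_sin θ, hβ.le]
    · nlinarith [Real.sin_le_one θ, hβ.le]
  have h := intervalIntegral.integral_comp_smul_deriv' hderiv hcont hg
  simp only [smul_eq_mul, Real.sin_neg, Real.sin_pi_div_two, mul_neg_one, mul_one] at h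
  rw [← h]
  apply intervalIntegral.integral_congr
  intro θ _
  simp only [Function.comp_apply]

lemma subst_cos_right {α : ℝ} (hβ : 0 < β) {f : ℝ → ℝ}
    (hf : ContinuousOn f (Icc α (α + β))) :
    ∫ x in α..(α + β), f x = β * ∫ θ in (0:ℝ)..(π/2), sin θ * f (α + β * cos θ) := by
  have hderiv : ∀ θ ∈ uIcc (π/2) (0:ℝ),
      HasDerivAt (fun θ => α + β * cos θ) (β * -sin θ) θ := fun θ _ =>
    ((Real.hasDerivAt_cos θ).const_mul β).const_add α
  have hcont : ContinuousOn (fun θ => β * -sin θ) (uIcc (π/2) (0:ℝ)) :=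
    (continuous_const.mul Real.continuous_sin.neg).continuousOn
  have hg : ContinuousOn f ((fun θ => α + β * cos θ) '' uIcc (π/2) (0:ℝ)) := by
    apply hf.mono
    rintro _ ⟨θ, hθ, rfl⟩
    rw [uIcc_comm, uIcc_of_le (by positivity : (0:ℝ) ≤ π/2)] at hθ
    have hc : 0 ≤ cos θ :=
      Real.cos_nonneg_of_mem_Icc ⟨by linarith [hθ.1, Real.pi_pos], hθ.2⟩
    show α + β * cos θ ∈ Icc α (α + β)
    rw [mem_Icc]
    constructor
    · nlinarith
    · nlinarith [Real.cos_le_one θ, hβ.le]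
  have h := intervalIntegral.integral_comp_smul_deriv' hderiv hcont hg
  simp only [smul_eq_mul, Real.cos_pi_div_two, Real.cos_zero, mul_zero, add_zero, mul_one] at h
  rw [← h, intervalIntegral.integral_symm, ← intervalIntegral.integral_neg,
    ← intervalIntegral.integral_const_mul]
  apply intervalIntegral.integral_congr
  intro θ _
  simp only [Function.comp_apply]
  ring

lemma subst_cos_left {α : ℝ} (hβ : 0 < β) {f : ℝ → ℝ}
    (hf : ContinuousOn f (Icc (-(α + β)) (-α))) :
    ∫ x in (-(α + β))..(-α), f x =
      β * ∫ θ in (0:ℝ)..(π/2), sin θ * f (-(α + β * cos θ)) := by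
  have hderiv : ∀ θ ∈ uIcc (0:ℝ) (π/2),
      HasDerivAt (fun θ => -(α + β * cos θ)) (β * sin θ) θ := by
    intro θ _
    have := (((Real.hasDerivAt_cos θ).const_mul β).const_add α).neg
    have h2 : HasDerivAt (fun θ => -(α + β * cos θ)) (-(β * -sin θ)) θ := this
    exact h2.congr_deriv (by ring)
  have hcont : ContinuousOn (fun θ => β * sin θ) (uIcc (0:ℝ) (π/2)) :=
    (continuous_const.mul Real.continuous_sin).continuousOn
  have hg : ContinuousOn f ((fun θ => -(α + β * cos θ)) '' uIcc (0:ℝ) (π/2)) := by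
    apply hf.mono
    rintro _ ⟨θ, hθ, rfl⟩
    rw [uIcc_of_le (by positivity : (0:ℝ) ≤ π/2)] at hθ
    have hc : 0 ≤ cos θ :=
      Real.cos_nonneg_of_mem_Icc ⟨by linarith [hθ.1, Real.pi_pos], hθ.2⟩
    show -(α + β * cos θ) ∈ Icc (-(α + β)) (-α)
    rw [mem_Icc]
    constructor
    · nlinarith [Real.cos_le_one θ, hβ.le]
    · nlinarith
  have h := intervalIntegral.integral_comp_smul_deriv' hderiv hcont hg
  simp only [smul_eq_mul, Real.cos_pi_div_two, Real.cos_zero, mul_zero, add_zero, mul_one] at h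
  rw [← h, ← intervalIntegral.integral_const_mul]
  apply intervalIntegral.integral_congr
  intro θ _
  simp only [Function.comp_apply]
  ring



-- stand-ins for already-proven lemmas

-- new material
variable {α β : ℝ} {V : Set (ℝ × ℝ)} {P Q : ℝ × ℝ → ℝ}

lemma rect_subset_stadium : Rect α β ⊆ Stadium α β := subset_union_left
lemma wp_subset_stadium' : WP α β ⊆ Stadium α β := fun p hp =>
  Or.inr (Or.inl hp)
lemma wm_subset_stadium : WM α β ⊆ Stadium α β := fun p hp =>
  Or.inr (Or.inr hp)

lemma mem_wp (hβ : 0 < β) {θ y : ℝ} (hθ : θ ∈ Icc (-(π/2)) (π/2))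
    (hy : y ^ 2 = (β * sin θ) ^ 2) : ((α + β * cos θ, y) : ℝ × ℝ) ∈ WP α β := by
  have hc : 0 ≤ cos θ := Real.cos_nonneg_of_mem_Icc (by simpa using hθ)
  constructor
  · show (α + β * cos θ - α) ^ 2 + y ^ 2 ≤ β ^ 2
    rw [hy]
    nlinarith [Real.sin_sq_add_cos_sq θ]
  · show α ≤ α + β * cos θ
    nlinarith

lemma mem_wm (hβ : 0 < β) {θ y : ℝ} (hθ : θ ∈ Icc (-(π/2)) (π/2))
    (hy : y ^ 2 = (β * sin θ) ^ 2) : ((-(α + β * cos θ), y) : ℝ × ℝ) ∈ WM α β := by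
  have hc : 0 ≤ cos θ := Real.cos_nonneg_of_mem_Icc (by simpa using hθ)
  constructor
  · show (-(α + β * cos θ) + α) ^ 2 + y ^ 2 ≤ β ^ 2
    rw [hy]
    nlinarith [Real.sin_sq_add_cos_sq θ]
  · show -(α + β * cos θ) ≤ -α
    nlinarith

lemma contOn_curve_r (hα : 0 < α) (hβ : 0 < β) (hV : IsOpen V) (hSV : Stadium α β ⊆ V)
    (hQ : ContDiffOn ℝ (⊤ : ℕ∞) Q V) :
    ContinuousOn (fun θ : ℝ => Q (α + β * cos θ, β * sin θ)) (Icc (-(π/2)) (π/2)) := by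
  apply hQ.continuousOn.comp (Continuous.continuousOn (by continuity))
  intro θ hθ
  exact hSV (wp_subset_stadium' (mem_wp hβ hθ rfl))

lemma contOn_curve_l (hα : 0 < α) (hβ : 0 < β) (hV : IsOpen V) (hSV : Stadium α β ⊆ V)
    (hQ : ContDiffOn ℝ (⊤ : ℕ∞) Q V) :
    ContinuousOn (fun θ : ℝ => Q (-(α + β * cos θ), β * sin θ)) (Icc (-(π/2)) (π/2)) := by
  apply hQ.continuousOn.comp (Continuous.continuousOn (by continuity))
  intro θ hθ
  exact hSV (wm_subset_stadium (mem_wm hβ hθ rfl))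

set_option maxHeartbeats 1000000 in
lemma partX (hα : 0 < α) (hβ : 0 < β) (hV : IsOpen V) (hSV : Stadium α β ⊆ V)
    (hP : ContDiffOn ℝ (⊤ : ℕ∞) P V) :
    ∫ p in Stadium α β, pdx P p
      = β * ∫ θ in (-(π/2))..(π/2),
          (cos θ * P (α + β * cos θ, β * sin θ)
            - cos θ * P (-(α + β * cos θ), β * sin θ)) := by
  have hInt : IntegrableOn (pdx P) (Stadium α β) :=
    ((contDiffOn_pdx hV hP).continuousOn.mono hSV).integrableOn_compact
      (isCompact_stadium hα hβ)
  rw [integral_xslices (c := -β) (d := β)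
    (φ := fun y => -(α + Real.sqrt (β^2 - y^2)))
    (ψ := fun y => α + Real.sqrt (β^2 - y^2))
    measurableSet_stadium hInt (fun y => sliceX_stadium hα hβ y)]
  have step1 : ∀ y ∈ Icc (-β) β,
      (∫ x in Icc (-(α + Real.sqrt (β^2 - y^2))) (α + Real.sqrt (β^2 - y^2)), pdx P (x, y))
        = (fun y => P (α + Real.sqrt (β^2 - y^2), y)
            - P (-(α + Real.sqrt (β^2 - y^2)), y)) y := by
    intro y hy
    have hs0 : 0 ≤ Real.sqrt (β^2 - y^2) := Real.sqrt_nonneg _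
    apply ftc_x hV hP (by linarith)
    intro x hx
    apply hSV
    have h := sliceX_stadium hα hβ (α := α) (β := β) y
    have hmem : x ∈ {x : ℝ | (x, y) ∈ Stadium α β} := by
      rw [h, if_pos hy]; exact hx
    exact hmem
  rw [setIntegral_congr_fun measurableSet_Icc step1]
  have hcs : Continuous (fun y : ℝ => Real.sqrt (β^2 - y^2)) :=
    Real.continuous_sqrt.comp (by continuity)
  have hmemS : ∀ y ∈ Icc (-β) β, ((α + Real.sqrt (β^2 - y^2), y) : ℝ × ℝ) ∈ Stadium α β := by
    intro y hy
    have h := sliceX_stadium hα hβ (α := α) (β := β) y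
    have : α + Real.sqrt (β^2 - y^2) ∈ {x : ℝ | (x, y) ∈ Stadium α β} := by
      rw [h, if_pos hy]
      exact ⟨by linarith [Real.sqrt_nonneg (β^2 - y^2), hα.le], le_refl _⟩
    exact this
  have hmemS' : ∀ y ∈ Icc (-β) β,
      ((-(α + Real.sqrt (β^2 - y^2)), y) : ℝ × ℝ) ∈ Stadium α β := by
    intro y hy
    have h := sliceX_stadium hα hβ (α := α) (β := β) y
    have : -(α + Real.sqrt (β^2 - y^2)) ∈ {x : ℝ | (x, y) ∈ Stadium α β} := by
      rw [h, if_pos hy]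
      exact ⟨le_refl _, by linarith [Real.sqrt_nonneg (β^2 - y^2), hα.le]⟩
    exact this
  have hfc : ContinuousOn (fun y => P (α + Real.sqrt (β^2 - y^2), y)
      - P (-(α + Real.sqrt (β^2 - y^2)), y)) (Icc (-β) β) := by
    apply ContinuousOn.sub
    · exact hP.continuousOn.comp (Continuous.continuousOn (by continuity))
        (fun y hy => hSV (hmemS y hy))
    · exact hP.continuousOn.comp (Continuous.continuousOn (by continuity))
        (fun y hy => hSV (hmemS' y hy))
  rw [MeasureTheory.integral_Icc_eq_integral_Ioc,
    ← intervalIntegral.integral_of_le (by linarith : -β ≤ β), subst_sin hβ hfc,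
    ← intervalIntegral.integral_const_mul]
  apply intervalIntegral.integral_congr
  intro θ hθ
  rw [uIcc_of_le (by linarith [Real.pi_pos] : -(π/2) ≤ π/2)] at hθ
  have hc : 0 ≤ cos θ := Real.cos_nonneg_of_mem_Icc (by simpa using hθ)
  have hsq : Real.sqrt (β^2 - (β * sin θ)^2) = β * cos θ := by
    rw [show β^2 - (β * sin θ)^2 = (β * cos θ)^2 by nlinarith [Real.sin_sq_add_cos_sq θ]]
    exact Real.sqrt_sq (by positivity)
  simp only [hsq]
  ring

lemma partRect (hα : 0 < α) (hβ : 0 < β) (hV : IsOpen V) (hSV : Stadium α β ⊆ V)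
    (hQ : ContDiffOn ℝ (⊤ : ℕ∞) Q V) :
    ∫ p in Rect α β, pdy Q p = ∫ x in (-α)..α, (Q (x, β) - Q (x, -β)) := by
  have hRmeas : MeasurableSet (Rect α β) := (isClosed_Icc.prod isClosed_Icc).measurableSet
  have hRsub : Rect α β ⊆ V := rect_subset_stadium.trans hSV
  have hInt : IntegrableOn (pdy Q) (Rect α β) :=
    ((contDiffOn_pdy hV hQ).continuousOn.mono hRsub).integrableOn_compact
      (isCompact_Icc.prod isCompact_Icc)
  rw [integral_yslices (c := -α) (d := α) (φ := fun _ => -β) (ψ := fun _ => β)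
    hRmeas hInt (fun x => sliceY_rect x)]
  have step1 : ∀ x ∈ Icc (-α) α,
      (∫ y in Icc (-β) β, pdy Q (x, y)) = (fun x => Q (x, β) - Q (x, -β)) x := by
    intro x hx
    apply ftc_y hV hQ (by linarith)
    intro y hy
    exact hRsub ⟨hx, hy⟩
  rw [setIntegral_congr_fun measurableSet_Icc step1,
    MeasureTheory.integral_Icc_eq_integral_Ioc,
    ← intervalIntegral.integral_of_le (by linarith : -α ≤ α)]

lemma partWP (hα : 0 < α) (hβ : 0 < β) (hV : IsOpen V) (hSV : Stadium α β ⊆ V)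
    (hQ : ContDiffOn ℝ (⊤ : ℕ∞) Q V) :
    ∫ p in WP α β, pdy Q p
      = β * ∫ θ in (0:ℝ)..(π/2),
          sin θ * (Q (α + β * cos θ, β * sin θ) - Q (α + β * cos θ, -(β * sin θ))) := by
  have hWmeas : MeasurableSet (WP α β) := isClosed_wp.measurableSet
  have hWsub : WP α β ⊆ V := wp_subset_stadium'.trans hSV
  have hWcpt : IsCompact (WP α β) :=
    (isCompact_stadium hα hβ).of_isClosed_subset isClosed_wp wp_subset_stadium'
  have hInt : IntegrableOn (pdy Q) (WP α β) :=
    ((contDiffOn_pdy hV hQ).continuousOn.mono hWsub).integrableOn_compact hWcpt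
  rw [integral_yslices (c := α) (d := α + β)
    (φ := fun x => -Real.sqrt (β^2 - (x - α)^2))
    (ψ := fun x => Real.sqrt (β^2 - (x - α)^2))
    hWmeas hInt (fun x => sliceY_wp hβ x)]
  have step1 : ∀ x ∈ Icc α (α + β),
      (∫ y in Icc (-Real.sqrt (β^2 - (x - α)^2)) (Real.sqrt (β^2 - (x - α)^2)), pdy Q (x, y))
        = (fun x => Q (x, Real.sqrt (β^2 - (x - α)^2))
            - Q (x, -Real.sqrt (β^2 - (x - α)^2))) x := by
    intro x hx
    have hs0 : 0 ≤ Real.sqrt (β^2 - (x - α)^2) := Real.sqrt_nonneg _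
    apply ftc_y hV hQ (by linarith)
    intro y hy
    apply hWsub
    have h := sliceY_wp (α := α) hβ x
    have : y ∈ {y : ℝ | (x, y) ∈ WP α β} := by rw [h, if_pos hx]; exact hy
    exact this
  rw [setIntegral_congr_fun measurableSet_Icc step1]
  have hmem : ∀ x ∈ Icc α (α + β), ∀ ε : ℝ, ε ^ 2 = 1 →
      ((x, ε * Real.sqrt (β^2 - (x - α)^2)) : ℝ × ℝ) ∈ WP α β := by
    intro x hx ε hε
    have hxx : (x - α) ^ 2 ≤ β ^ 2 := by
      rw [mem_Icc] at hx
      nlinarith [hx.1, hx.2]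
    constructor
    · show (x - α) ^ 2 + (ε * Real.sqrt (β^2 - (x - α)^2)) ^ 2 ≤ β ^ 2
      rw [mul_pow, hε, one_mul, Real.sq_sqrt (by linarith)]
      ring_nf
      linarith
    · exact hx.1
  have hfc : ContinuousOn (fun x => Q (x, Real.sqrt (β^2 - (x - α)^2))
      - Q (x, -Real.sqrt (β^2 - (x - α)^2))) (Icc α (α + β)) := by
    apply ContinuousOn.sub
    · apply hQ.continuousOn.comp (Continuous.continuousOn (by continuity))
      intro x hx
      have := hmem x hx 1 (by norm_num)
      simpa using hWsub (by simpa using this)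
    · apply hQ.continuousOn.comp (Continuous.continuousOn (by continuity))
      intro x hx
      have := hmem x hx (-1) (by norm_num)
      have h2 : ((x, -Real.sqrt (β^2 - (x - α)^2)) : ℝ × ℝ) ∈ WP α β := by
        simpa using this
      exact hWsub h2
  rw [MeasureTheory.integral_Icc_eq_integral_Ioc,
    ← intervalIntegral.integral_of_le (by linarith : α ≤ α + β), subst_cos_right hβ hfc]
  congr 1
  apply intervalIntegral.integral_congr
  intro θ hθ
  rw [uIcc_of_le (by linarith [Real.pi_pos] : (0:ℝ) ≤ π/2)] at hθ
  have hs : 0 ≤ sin θ := Real.sin_nonneg_of_nonneg_of_le_pi hθ.1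
    (by linarith [hθ.2, Real.pi_pos])
  have hsq : Real.sqrt (β^2 - (α + β * cos θ - α)^2) = β * sin θ := by
    rw [show β^2 - (α + β * cos θ - α)^2 = (β * sin θ)^2 by
      nlinarith [Real.sin_sq_add_cos_sq θ]]
    exact Real.sqrt_sq (by positivity)
  simp only [hsq]

lemma partWM (hα : 0 < α) (hβ : 0 < β) (hV : IsOpen V) (hSV : Stadium α β ⊆ V)
    (hQ : ContDiffOn ℝ (⊤ : ℕ∞) Q V) :
    ∫ p in WM α β, pdy Q p
      = β * ∫ θ in (0:ℝ)..(π/2),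
          sin θ * (Q (-(α + β * cos θ), β * sin θ) - Q (-(α + β * cos θ), -(β * sin θ))) := by
  have hWmeas : MeasurableSet (WM α β) := isClosed_wm.measurableSet
  have hWsub : WM α β ⊆ V := wm_subset_stadium.trans hSV
  have hWcpt : IsCompact (WM α β) :=
    (isCompact_stadium hα hβ).of_isClosed_subset isClosed_wm wm_subset_stadium
  have hInt : IntegrableOn (pdy Q) (WM α β) :=
    ((contDiffOn_pdy hV hQ).continuousOn.mono hWsub).integrableOn_compact hWcpt
  rw [integral_yslices (c := -(α + β)) (d := -α)
    (φ := fun x => -Real.sqrt (β^2 - (x + α)^2))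
    (ψ := fun x => Real.sqrt (β^2 - (x + α)^2))
    hWmeas hInt (fun x => sliceY_wm hβ x)]
  have step1 : ∀ x ∈ Icc (-(α + β)) (-α),
      (∫ y in Icc (-Real.sqrt (β^2 - (x + α)^2)) (Real.sqrt (β^2 - (x + α)^2)), pdy Q (x, y))
        = (fun x => Q (x, Real.sqrt (β^2 - (x + α)^2))
            - Q (x, -Real.sqrt (β^2 - (x + α)^2))) x := by
    intro x hx
    have hs0 : 0 ≤ Real.sqrt (β^2 - (x + α)^2) := Real.sqrt_nonneg _
    apply ftc_y hV hQ (by linarith)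
    intro y hy
    apply hWsub
    have h := sliceY_wm (α := α) hβ x
    have : y ∈ {y : ℝ | (x, y) ∈ WM α β} := by rw [h, if_pos hx]; exact hy
    exact this
  rw [setIntegral_congr_fun measurableSet_Icc step1]
  have hmem : ∀ x ∈ Icc (-(α + β)) (-α), ∀ ε : ℝ, ε ^ 2 = 1 →
      ((x, ε * Real.sqrt (β^2 - (x + α)^2)) : ℝ × ℝ) ∈ WM α β := by
    intro x hx ε hε
    have hxx : (x + α) ^ 2 ≤ β ^ 2 := by
      rw [mem_Icc] at hx
      nlinarith [hx.1, hx.2]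
    constructor
    · show (x + α) ^ 2 + (ε * Real.sqrt (β^2 - (x + α)^2)) ^ 2 ≤ β ^ 2
      rw [mul_pow, hε, one_mul, Real.sq_sqrt (by linarith)]
      ring_nf
      linarith
    · exact hx.2
  have hfc : ContinuousOn (fun x => Q (x, Real.sqrt (β^2 - (x + α)^2))
      - Q (x, -Real.sqrt (β^2 - (x + α)^2))) (Icc (-(α + β)) (-α)) := by
    apply ContinuousOn.sub
    · apply hQ.continuousOn.comp (Continuous.continuousOn (by continuity))
      intro x hx
      have := hmem x hx 1 (by norm_num)
      exact hWsub (by simpa using this)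
    · apply hQ.continuousOn.comp (Continuous.continuousOn (by continuity))
      intro x hx
      have := hmem x hx (-1) (by norm_num)
      have h2 : ((x, -Real.sqrt (β^2 - (x + α)^2)) : ℝ × ℝ) ∈ WM α β := by
        simpa using this
      exact hWsub h2
  rw [MeasureTheory.integral_Icc_eq_integral_Ioc,
    ← intervalIntegral.integral_of_le (by linarith : -(α + β) ≤ -α), subst_cos_left hβ hfc]
  congr 1
  apply intervalIntegral.integral_congr
  intro θ hθ
  rw [uIcc_of_le (by linarith [Real.pi_pos] : (0:ℝ) ≤ π/2)] at hθ
  have hs : 0 ≤ sin θ := Real.sin_nonneg_of_nonneg_of_le_pi hθ.1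
    (by linarith [hθ.2, Real.pi_pos])
  have hsq : Real.sqrt (β^2 - (-(α + β * cos θ) + α)^2) = β * sin θ := by
    rw [show β^2 - (-(α + β * cos θ) + α)^2 = (β * sin θ)^2 by
      nlinarith [Real.sin_sq_add_cos_sq θ]]
    exact Real.sqrt_sq (by positivity)
  simp only [hsq]

lemma stadium_split (hα : 0 < α) (hβ : 0 < β) {F : ℝ × ℝ → ℝ}
    (hF : IntegrableOn F (Stadium α β)) :
    ∫ p in Stadium α β, F p
      = (∫ p in Rect α β, F p) + (∫ p in WP α β, F p) + (∫ p in WM α β, F p) := by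
  have hR : MeasurableSet (Rect α β) := (isClosed_Icc.prod isClosed_Icc).measurableSet
  have hP : MeasurableSet (WP α β) := isClosed_wp.measurableSet
  have hM : MeasurableSet (WM α β) := isClosed_wm.measurableSet
  have hFR : IntegrableOn F (Rect α β) := hF.mono_set rect_subset_stadium
  have hFP : IntegrableOn F (WP α β) := hF.mono_set wp_subset_stadium'
  have hFM : IntegrableOn F (WM α β) := hF.mono_set wm_subset_stadium
  have hdisj : Disjoint (WP α β) (WM α β) := by
    rw [Set.disjoint_left]
    rintro ⟨x, y⟩ ⟨_, h1⟩ ⟨_, h2⟩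
    simp only at h1 h2
    linarith
  have hae : AEDisjoint volume (Rect α β) (WP α β ∪ WM α β) := by
    refine measure_mono_null ?_
      (measure_union_null (volume_vline α) (volume_vline (-α)))
    · rintro ⟨x, y⟩ ⟨hr, hw⟩
      rcases hw with h | h
      · left
        have h1 : x ≤ α := hr.1.2
        have h2 : α ≤ x := h.2
        simp only [mem_setOf_eq]
        linarith
      · right
        have h1 : -α ≤ x := hr.1.1
        have h2 : x ≤ -α := h.2
        simp only [mem_setOf_eq]
        linarith
  have e1 : ∫ p in Stadium α β, F p
      = (∫ p in Rect α β, F p) + ∫ p in WP α β ∪ WM α β, F p := by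
    rw [show Stadium α β = Rect α β ∪ (WP α β ∪ WM α β) from rfl]
    exact integral_union_ae hae (hP.union hM).nullMeasurableSet hFR (hFP.union hFM)
  rw [e1, setIntegral_union hdisj hM hFP hFM, add_assoc]


lemma contOn_curve_r' (hα : 0 < α) (hβ : 0 < β) (hV : IsOpen V) (hSV : Stadium α β ⊆ V)
    (hQ : ContDiffOn ℝ (⊤ : ℕ∞) Q V) :
    ContinuousOn (fun θ : ℝ => Q (α + β * cos θ, -(β * sin θ))) (Icc (-(π/2)) (π/2)) := by
  apply hQ.continuousOn.comp (Continuous.continuousOn (by continuity))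
  intro θ hθ
  exact hSV (wp_subset_stadium' (mem_wp hβ hθ (by ring)))

lemma contOn_curve_l' (hα : 0 < α) (hβ : 0 < β) (hV : IsOpen V) (hSV : Stadium α β ⊆ V)
    (hQ : ContDiffOn ℝ (⊤ : ℕ∞) Q V) :
    ContinuousOn (fun θ : ℝ => Q (-(α + β * cos θ), -(β * sin θ))) (Icc (-(π/2)) (π/2)) := by
  apply hQ.continuousOn.comp (Continuous.continuousOn (by continuity))
  intro θ hθ
  exact hSV (wm_subset_stadium (mem_wm hβ hθ (by ring)))

lemma sub_uIcc : uIcc (0:ℝ) (π/2) ⊆ Icc (-(π/2)) (π/2) := by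
  rw [uIcc_of_le (by positivity)]
  apply Icc_subset_Icc (by linarith [Real.pi_pos]) le_rfl

lemma sub_uIcc' : uIcc (-(π/2)) (0:ℝ) ⊆ Icc (-(π/2)) (π/2) := by
  rw [uIcc_of_le (by linarith [Real.pi_pos])]
  apply Icc_subset_Icc le_rfl (by linarith [Real.pi_pos])

lemma reflect_gen {G G' : ℝ → ℝ}
    (hG : ContinuousOn (fun θ => sin θ * G θ) (Icc (-(π/2)) (π/2)))
    (hG' : ContinuousOn (fun θ => sin θ * G' θ) (Icc (-(π/2)) (π/2)))
    (hrefl : ∀ θ, G (-θ) = G' θ) :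
    ∫ θ in (-(π/2))..(π/2), sin θ * G θ
      = ∫ θ in (0:ℝ)..(π/2), sin θ * (G θ - G' θ) := by
  have hi1 : IntervalIntegrable (fun θ => sin θ * G θ) volume (-(π/2)) 0 :=
    (hG.mono sub_uIcc').intervalIntegrable
  have hi2 : IntervalIntegrable (fun θ => sin θ * G θ) volume 0 (π/2) :=
    (hG.mono sub_uIcc).intervalIntegrable
  have hi3 : IntervalIntegrable (fun θ => -(sin θ * G' θ)) volume 0 (π/2) :=
    ((hG'.mono sub_uIcc).intervalIntegrable).neg
  rw [← intervalIntegral.integral_add_adjacent_intervals hi1 hi2]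
  have hneg : ∫ θ in (-(π/2))..(0:ℝ), sin θ * G θ
      = ∫ θ in (0:ℝ)..(π/2), -(sin θ * G' θ) := by
    have h := intervalIntegral.integral_comp_neg (a := (0:ℝ)) (b := π/2)
      (f := fun θ => sin θ * G θ)
    rw [neg_zero] at h
    rw [← h]
    apply intervalIntegral.integral_congr
    intro θ _
    simp only [Real.sin_neg, hrefl θ, neg_mul]
  rw [hneg, ← intervalIntegral.integral_add hi3 hi2]
  apply intervalIntegral.integral_congr
  intro θ _
  ring

theorem div_stadium (hα : 0 < α) (hβ : 0 < β) (hV : IsOpen V) (hSV : Stadium α β ⊆ V)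
    (hP : ContDiffOn ℝ (⊤ : ℕ∞) P V) (hQ : ContDiffOn ℝ (⊤ : ℕ∞) Q V) :
    ∫ p in Stadium α β, (pdx P p + pdy Q p)
      = bdryInt α β (fun p n => n.1 * P p + n.2 * Q p) := by
  have hIx : IntegrableOn (pdx P) (Stadium α β) :=
    ((contDiffOn_pdx hV hP).continuousOn.mono hSV).integrableOn_compact
      (isCompact_stadium hα hβ)
  have hIy : IntegrableOn (pdy Q) (Stadium α β) :=
    ((contDiffOn_pdy hV hQ).continuousOn.mono hSV).integrableOn_compact
      (isCompact_stadium hα hβ)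
  rw [MeasureTheory.integral_add hIx hIy, partX hα hβ hV hSV hP, stadium_split hα hβ hIy,
    partRect hα hβ hV hSV hQ, partWP hα hβ hV hSV hQ, partWM hα hβ hV hSV hQ, bdryInt]
  show _ = (∫ x in (-α)..α,
      ((0:ℝ) * P (x, β) + 1 * Q (x, β) + ((0:ℝ) * P (x, -β) + -1 * Q (x, -β)))) +
    β * ∫ θ in (-(π/2))..(π/2),
      (cos θ * P (α + β * cos θ, β * sin θ) + sin θ * Q (α + β * cos θ, β * sin θ) +
        (-cos θ * P (-(α + β * cos θ), β * sin θ) + sin θ * Q (-(α + β * cos θ), β * sin θ)))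
  have hseg : (∫ x in (-α)..α,
      ((0:ℝ) * P (x, β) + 1 * Q (x, β) + ((0:ℝ) * P (x, -β) + -1 * Q (x, -β))))
      = ∫ x in (-α)..α, (Q (x, β) - Q (x, -β)) :=
    intervalIntegral.integral_congr fun x _ => by ring
  have hA : IntervalIntegrable (fun θ => cos θ * P (α + β * cos θ, β * sin θ)
      - cos θ * P (-(α + β * cos θ), β * sin θ)) volume (-(π/2)) (π/2) := by
    apply ContinuousOn.intervalIntegrable
    rw [uIcc_of_le (by linarith [Real.pi_pos])]
    exact (Real.continuous_cos.continuousOn.mul (contOn_curve_r hα hβ hV hSV hP)).sub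
      (Real.continuous_cos.continuousOn.mul (contOn_curve_l hα hβ hV hSV hP))
  have hB : IntervalIntegrable (fun θ => sin θ * Q (α + β * cos θ, β * sin θ)) volume
      (-(π/2)) (π/2) := by
    apply ContinuousOn.intervalIntegrable
    rw [uIcc_of_le (by linarith [Real.pi_pos])]
    exact Real.continuous_sin.continuousOn.mul (contOn_curve_r hα hβ hV hSV hQ)
  have hC : IntervalIntegrable (fun θ => sin θ * Q (-(α + β * cos θ), β * sin θ)) volume
      (-(π/2)) (π/2) := by
    apply ContinuousOn.intervalIntegrable
    rw [uIcc_of_le (by linarith [Real.pi_pos])]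
    exact Real.continuous_sin.continuousOn.mul (contOn_curve_l hα hβ hV hSV hQ)
  have hsplitθ : (∫ θ in (-(π/2))..(π/2),
      (cos θ * P (α + β * cos θ, β * sin θ) + sin θ * Q (α + β * cos θ, β * sin θ) +
        (-cos θ * P (-(α + β * cos θ), β * sin θ) + sin θ * Q (-(α + β * cos θ), β * sin θ))))
      = (∫ θ in (-(π/2))..(π/2), (cos θ * P (α + β * cos θ, β * sin θ)
          - cos θ * P (-(α + β * cos θ), β * sin θ)))
        + (∫ θ in (-(π/2))..(π/2), sin θ * Q (α + β * cos θ, β * sin θ))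
        + (∫ θ in (-(π/2))..(π/2), sin θ * Q (-(α + β * cos θ), β * sin θ)) := by
    rw [← intervalIntegral.integral_add hA hB, ← intervalIntegral.integral_add (hA.add hB) hC]
    apply intervalIntegral.integral_congr
    intro θ _
    ring
  have hreflR : ∫ θ in (-(π/2))..(π/2), sin θ * Q (α + β * cos θ, β * sin θ)
      = ∫ θ in (0:ℝ)..(π/2),
          sin θ * (Q (α + β * cos θ, β * sin θ) - Q (α + β * cos θ, -(β * sin θ))) := by
    apply reflect_gen
      (Real.continuous_sin.continuousOn.mul (contOn_curve_r hα hβ hV hSV hQ))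
      (Real.continuous_sin.continuousOn.mul (contOn_curve_r' hα hβ hV hSV hQ))
    intro θ
    simp [Real.cos_neg, Real.sin_neg]
  have hreflL : ∫ θ in (-(π/2))..(π/2), sin θ * Q (-(α + β * cos θ), β * sin θ)
      = ∫ θ in (0:ℝ)..(π/2),
          sin θ * (Q (-(α + β * cos θ), β * sin θ) - Q (-(α + β * cos θ), -(β * sin θ))) := by
    apply reflect_gen
      (Real.continuous_sin.continuousOn.mul (contOn_curve_l hα hβ hV hSV hQ))
      (Real.continuous_sin.continuousOn.mul (contOn_curve_l' hα hβ hV hSV hQ))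
    intro θ
    simp [Real.cos_neg, Real.sin_neg]
  rw [hseg, hsplitθ, hreflR, hreflL]
  ring




variable {V : Set (ℝ × ℝ)} {u a b : ℝ × ℝ → ℝ}

lemma contDiffOn_L (hV : IsOpen V) (hu : ContDiffOn ℝ (⊤ : ℕ∞) u V) (ha : ContDiffOn ℝ (⊤ : ℕ∞) a V)
    (hb : ContDiffOn ℝ (⊤ : ℕ∞) b V) :
    ContDiffOn ℝ (⊤ : ℕ∞) (fun q => a q * pdx u q + b q * pdy u q) V :=
  (ha.mul (contDiffOn_pdx hV hu)).add (hb.mul (contDiffOn_pdy hV hu))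

lemma contDiffOn_lap (hV : IsOpen V) (hu : ContDiffOn ℝ (⊤ : ℕ∞) u V) :
    ContDiffOn ℝ (⊤ : ℕ∞) (lap u) V := by
  have h : ContDiffOn ℝ (⊤ : ℕ∞) (fun q => -(pdx (pdx u) q) - pdy (pdy u) q) V :=
    ((contDiffOn_pdx hV (contDiffOn_pdx hV hu)).neg).sub
      (contDiffOn_pdy hV (contDiffOn_pdy hV hu))
  exact h

lemma pointwise (hV : IsOpen V) (hu : ContDiffOn ℝ (⊤ : ℕ∞) u V) (ha : ContDiffOn ℝ (⊤ : ℕ∞) a V)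
    (hb : ContDiffOn ℝ (⊤ : ℕ∞) b V) (lam : ℝ) {p : ℝ × ℝ} (hp : p ∈ V) :
    pdx (fun q => (a q * pdx u q + b q * pdy u q) * pdx u q
          - u q * pdx (fun r => a r * pdx u r + b r * pdy u r) q
          - u q * (lap u q - lam ^ 2 * u q) * a q) p
      + pdy (fun q => (a q * pdx u q + b q * pdy u q) * pdy u q
          - u q * pdy (fun r => a r * pdx u r + b r * pdy u r) q
          - u q * (lap u q - lam ^ 2 * u q) * b q) p
      = u p * (lap (fun r => a r * pdx u r + b r * pdy u r) p
            - (a p * pdx (lap u) p + b p * pdy (lap u) p))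
        - (2 * (a p * pdx u p + b p * pdy u p) + (pdx a p + pdy b p) * u p)
            * (lap u p - lam ^ 2 * u p) := by
  have cL : ContDiffOn ℝ (⊤ : ℕ∞) (fun r => a r * pdx u r + b r * pdy u r) V :=
    contDiffOn_L hV hu ha hb
  have clap : ContDiffOn ℝ (⊤ : ℕ∞) (lap u) V := contDiffOn_lap hV hu
  -- x-direction basic derivatives
  have hu_x : HasDerivAt (fun t => u (t, p.2)) (pdx u p) p.1 :=
    hasDerivAt_x (diffAt hV hu hp)
  have ha_x : HasDerivAt (fun t => a (t, p.2)) (pdx a p) p.1 :=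
    hasDerivAt_x (diffAt hV ha hp)
  have hb_x : HasDerivAt (fun t => b (t, p.2)) (pdx b p) p.1 :=
    hasDerivAt_x (diffAt hV hb hp)
  have hux_x : HasDerivAt (fun t => pdx u (t, p.2)) (pdx (pdx u) p) p.1 :=
    hasDerivAt_x (diffAt hV (contDiffOn_pdx hV hu) hp)
  have huy_x : HasDerivAt (fun t => pdy u (t, p.2)) (pdx (pdy u) p) p.1 :=
    hasDerivAt_x (diffAt hV (contDiffOn_pdy hV hu) hp)
  have hLx_x : HasDerivAt (fun t => pdx (fun r => a r * pdx u r + b r * pdy u r) (t, p.2))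
      (pdx (pdx (fun r => a r * pdx u r + b r * pdy u r)) p) p.1 :=
    hasDerivAt_x (diffAt hV (contDiffOn_pdx hV cL) hp)
  have hlap_x : HasDerivAt (fun t => lap u (t, p.2)) (pdx (lap u) p) p.1 :=
    hasDerivAt_x (diffAt hV clap hp)
  -- y-direction basic derivatives
  have hu_y : HasDerivAt (fun t => u (p.1, t)) (pdy u p) p.2 :=
    hasDerivAt_y (diffAt hV hu hp)
  have ha_y : HasDerivAt (fun t => a (p.1, t)) (pdy a p) p.2 :=
    hasDerivAt_y (diffAt hV ha hp)
  have hb_y : HasDerivAt (fun t => b (p.1, t)) (pdy b p) p.2 :=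
    hasDerivAt_y (diffAt hV hb hp)
  have hux_y : HasDerivAt (fun t => pdx u (p.1, t)) (pdy (pdx u) p) p.2 :=
    hasDerivAt_y (diffAt hV (contDiffOn_pdx hV hu) hp)
  have huy_y : HasDerivAt (fun t => pdy u (p.1, t)) (pdy (pdy u) p) p.2 :=
    hasDerivAt_y (diffAt hV (contDiffOn_pdy hV hu) hp)
  have hLy_y : HasDerivAt (fun t => pdy (fun r => a r * pdx u r + b r * pdy u r) (p.1, t))
      (pdy (pdy (fun r => a r * pdx u r + b r * pdy u r)) p) p.2 :=
    hasDerivAt_y (diffAt hV (contDiffOn_pdy hV cL) hp)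
  have hlap_y : HasDerivAt (fun t => lap u (p.1, t)) (pdy (lap u) p) p.2 :=
    hasDerivAt_y (diffAt hV clap hp)
  -- expand pdx of the P-field
  have E1 : pdx (fun q => (a q * pdx u q + b q * pdy u q) * pdx u q
          - u q * pdx (fun r => a r * pdx u r + b r * pdy u r) q
          - u q * (lap u q - lam ^ 2 * u q) * a q) p = _ :=
    (((((ha_x.mul hux_x).add (hb_x.mul huy_x)).mul hux_x).sub
        (hu_x.mul hLx_x)).sub
      ((hu_x.mul (hlap_x.sub (hu_x.const_mul (lam ^ 2)))).mul ha_x)).deriv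
  have E2 : pdy (fun q => (a q * pdx u q + b q * pdy u q) * pdy u q
          - u q * pdy (fun r => a r * pdx u r + b r * pdy u r) q
          - u q * (lap u q - lam ^ 2 * u q) * b q) p = _ :=
    (((((ha_y.mul hux_y).add (hb_y.mul huy_y)).mul huy_y).sub
        (hu_y.mul hLy_y)).sub
      ((hu_y.mul (hlap_y.sub (hu_y.const_mul (lam ^ 2)))).mul hb_y)).deriv
  have eLx : pdx (fun r => a r * pdx u r + b r * pdy u r) p = _ :=
    ((ha_x.mul hux_x).add (hb_x.mul huy_x)).deriv
  have eLy : pdy (fun r => a r * pdx u r + b r * pdy u r) p = _ :=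
    ((ha_y.mul hux_y).add (hb_y.mul huy_y)).deriv
  simp only [Prod.mk.eta, Pi.mul_apply, Pi.add_apply, Pi.sub_apply] at E1 E2 eLx eLy
  rw [E1, E2, eLx, eLy]
  simp only [lap]
  ring
end Stmt6

open Stmt6 in
/-- Lemma 2.1, Rellich-type identity: for a real Dirichlet quasimode datum
`(u, λ, f)` and a smooth real vector field `A = a ∂_x + b ∂_y`,
`⟨u, [Δ - λ², A] u⟩ = ⟨2Au + (div A) u, f⟩ + ∫_{∂S} (∂_N u)(Au) dl`. -/
theorem stmt6 (α β : ℝ) (hα : 0 < α) (hβ : 0 < β) (d : QMDatum α β)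
    (a b : ℝ × ℝ → ℝ)
    (hab : ∃ V : Set (ℝ × ℝ), IsOpen V ∧ Stadium α β ⊆ V ∧
      ContDiffOn ℝ (⊤ : ℕ∞) a V ∧ ContDiffOn ℝ (⊤ : ℕ∞) b V)
    (A : (ℝ × ℝ → ℝ) → (ℝ × ℝ → ℝ))
    (hA : A = fun v p => a p * pdx v p + b p * pdy v p) :
    (∫ p in Stadium α β, d.u p * (lap (A d.u) p - A (lap d.u) p)) =
      (∫ p in Stadium α β, (2 * A d.u p + (pdx a p + pdy b p) * d.u p) * d.f p) +
      bdryInt α β (fun p n => nderiv d.u p n * A d.u p) := by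
  obtain ⟨V₁, hV₁, hS₁, hu₁⟩ := d.smooth
  obtain ⟨V₂, hV₂, hS₂, ha₂, hb₂⟩ := hab
  subst hA
  beta_reduce
  have hV : IsOpen (V₁ ∩ V₂) := hV₁.inter hV₂
  have hSV : Stadium α β ⊆ V₁ ∩ V₂ := subset_inter hS₁ hS₂
  have hu : ContDiffOn ℝ (⊤ : ℕ∞) d.u (V₁ ∩ V₂) := hu₁.mono inter_subset_left
  have ha : ContDiffOn ℝ (⊤ : ℕ∞) a (V₁ ∩ V₂) := ha₂.mono inter_subset_right
  have hb : ContDiffOn ℝ (⊤ : ℕ∞) b (V₁ ∩ V₂) := hb₂.mono inter_subset_right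
  have cL : ContDiffOn ℝ (⊤ : ℕ∞) (fun r => a r * pdx d.u r + b r * pdy d.u r) (V₁ ∩ V₂) :=
    contDiffOn_L hV hu ha hb
  have clap : ContDiffOn ℝ (⊤ : ℕ∞) (lap d.u) (V₁ ∩ V₂) := contDiffOn_lap hV hu
  have cg : ContDiffOn ℝ (⊤ : ℕ∞) (fun q => lap d.u q - d.lam ^ 2 * d.u q) (V₁ ∩ V₂) :=
    clap.sub (contDiffOn_const.mul hu)
  have cPl : ContDiffOn ℝ (⊤ : ℕ∞) (fun q => (a q * pdx d.u q + b q * pdy d.u q) * pdx d.u q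
      - d.u q * pdx (fun r => a r * pdx d.u r + b r * pdy d.u r) q
      - d.u q * (lap d.u q - d.lam ^ 2 * d.u q) * a q) (V₁ ∩ V₂) :=
    ((cL.mul (contDiffOn_pdx hV hu)).sub (hu.mul (contDiffOn_pdx hV cL))).sub
      ((hu.mul cg).mul ha)
  have cQl : ContDiffOn ℝ (⊤ : ℕ∞) (fun q => (a q * pdx d.u q + b q * pdy d.u q) * pdy d.u q
      - d.u q * pdy (fun r => a r * pdx d.u r + b r * pdy d.u r) q
      - d.u q * (lap d.u q - d.lam ^ 2 * d.u q) * b q) (V₁ ∩ V₂) :=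
    ((cL.mul (contDiffOn_pdy hV hu)).sub (hu.mul (contDiffOn_pdy hV cL))).sub
      ((hu.mul cg).mul hb)
  have hdiv := div_stadium hα hβ hV hSV cPl cQl
  have cE1 : ContinuousOn (fun p => d.u p * (lap (fun r => a r * pdx d.u r + b r * pdy d.u r) p
      - (a p * pdx (lap d.u) p + b p * pdy (lap d.u) p))) (V₁ ∩ V₂) := by
    apply hu.continuousOn.mul
    apply ContinuousOn.sub (contDiffOn_lap hV cL).continuousOn
    exact (ha.continuousOn.mul (contDiffOn_pdx hV clap).continuousOn).add
      (hb.continuousOn.mul (contDiffOn_pdy hV clap).continuousOn)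
  have cE2 : ContinuousOn (fun p => (2 * (a p * pdx d.u p + b p * pdy d.u p)
      + (pdx a p + pdy b p) * d.u p) * (lap d.u p - d.lam ^ 2 * d.u p)) (V₁ ∩ V₂) := by
    apply ContinuousOn.mul
    · exact (continuousOn_const.mul cL.continuousOn).add
        (((contDiffOn_pdx hV ha).continuousOn.add
          (contDiffOn_pdy hV hb).continuousOn).mul hu.continuousOn)
    · exact cg.continuousOn
  have I1 : IntegrableOn (fun p => d.u p * (lap (fun r => a r * pdx d.u r + b r * pdy d.u r) p
      - (a p * pdx (lap d.u) p + b p * pdy (lap d.u) p))) (Stadium α β) :=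
    (cE1.mono hSV).integrableOn_compact (isCompact_stadium hα hβ)
  have I2 : IntegrableOn (fun p => (2 * (a p * pdx d.u p + b p * pdy d.u p)
      + (pdx a p + pdy b p) * d.u p) * (lap d.u p - d.lam ^ 2 * d.u p)) (Stadium α β) :=
    (cE2.mono hSV).integrableOn_compact (isCompact_stadium hα hβ)
  have eqA : (∫ p in Stadium α β, (2 * (a p * pdx d.u p + b p * pdy d.u p)
      + (pdx a p + pdy b p) * d.u p) * d.f p)
      = ∫ p in Stadium α β, (2 * (a p * pdx d.u p + b p * pdy d.u p)
      + (pdx a p + pdy b p) * d.u p) * (lap d.u p - d.lam ^ 2 * d.u p) :=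
    setIntegral_congr_fun measurableSet_stadium (fun p hp => by rw [← d.eqn p hp])
  have eqB : (∫ p in Stadium α β,
      (pdx (fun q => (a q * pdx d.u q + b q * pdy d.u q) * pdx d.u q
          - d.u q * pdx (fun r => a r * pdx d.u r + b r * pdy d.u r) q
          - d.u q * (lap d.u q - d.lam ^ 2 * d.u q) * a q) p
        + pdy (fun q => (a q * pdx d.u q + b q * pdy d.u q) * pdy d.u q
          - d.u q * pdy (fun r => a r * pdx d.u r + b r * pdy d.u r) q
          - d.u q * (lap d.u q - d.lam ^ 2 * d.u q) * b q) p))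
      = ∫ p in Stadium α β,
        (d.u p * (lap (fun r => a r * pdx d.u r + b r * pdy d.u r) p
            - (a p * pdx (lap d.u) p + b p * pdy (lap d.u) p))
          - (2 * (a p * pdx d.u p + b p * pdy d.u p) + (pdx a p + pdy b p) * d.u p)
              * (lap d.u p - d.lam ^ 2 * d.u p)) :=
    setIntegral_congr_fun measurableSet_stadium
      (fun p hp => pointwise hV hu ha hb d.lam (hSV hp))
  have eqC : (∫ p in Stadium α β,
      (d.u p * (lap (fun r => a r * pdx d.u r + b r * pdy d.u r) p
          - (a p * pdx (lap d.u) p + b p * pdy (lap d.u) p))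
        - (2 * (a p * pdx d.u p + b p * pdy d.u p) + (pdx a p + pdy b p) * d.u p)
            * (lap d.u p - d.lam ^ 2 * d.u p)))
      = (∫ p in Stadium α β, d.u p * (lap (fun r => a r * pdx d.u r + b r * pdy d.u r) p
          - (a p * pdx (lap d.u) p + b p * pdy (lap d.u) p)))
        - ∫ p in Stadium α β, (2 * (a p * pdx d.u p + b p * pdy d.u p)
            + (pdx a p + pdy b p) * d.u p) * (lap d.u p - d.lam ^ 2 * d.u p) :=
    MeasureTheory.integral_sub I1 I2
  have eqD : bdryInt α β (fun p n =>
        n.1 * ((a p * pdx d.u p + b p * pdy d.u p) * pdx d.u p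
          - d.u p * pdx (fun r => a r * pdx d.u r + b r * pdy d.u r) p
          - d.u p * (lap d.u p - d.lam ^ 2 * d.u p) * a p)
        + n.2 * ((a p * pdx d.u p + b p * pdy d.u p) * pdy d.u p
          - d.u p * pdy (fun r => a r * pdx d.u r + b r * pdy d.u r) p
          - d.u p * (lap d.u p - d.lam ^ 2 * d.u p) * b p))
      = bdryInt α β (fun p n =>
          nderiv d.u p n * (a p * pdx d.u p + b p * pdy d.u p)) := by
    unfold bdryInt
    congr 1
    · apply intervalIntegral.integral_congr
      intro x hx
      rw [uIcc_of_le (by linarith : -α ≤ α)] at hx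
      have hxa : |x| ≤ α := abs_le.2 ⟨hx.1, hx.2⟩
      have h1 : d.u (x, β) = 0 := d.dirichlet _ (Or.inl ⟨hxa, Or.inl rfl⟩)
      have h2 : d.u (x, -β) = 0 := d.dirichlet _ (Or.inl ⟨hxa, Or.inr rfl⟩)
      dsimp only [nderiv]
      rw [h1, h2]
      ring
    · congr 1
      apply intervalIntegral.integral_congr
      intro θ hθ
      rw [uIcc_of_le (by linarith [Real.pi_pos] : -(π/2) ≤ π/2)] at hθ
      have hc : 0 ≤ cos θ := Real.cos_nonneg_of_mem_Icc (by simpa using hθ)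
      have hx1 : (0:ℝ) ≤ α + β * cos θ := by nlinarith
      have hb1 : ((α + β * cos θ, β * sin θ) : ℝ × ℝ) ∈ StadiumBoundary α β := by
        refine Or.inr ⟨?_, ?_⟩
        · show (|α + β * cos θ| - α) ^ 2 + (β * sin θ) ^ 2 = β ^ 2
          rw [abs_of_nonneg hx1]
          linear_combination β ^ 2 * (Real.sin_sq_add_cos_sq θ)
        · show α ≤ |α + β * cos θ|
          rw [abs_of_nonneg hx1]
          nlinarith
      have hb2 : ((-(α + β * cos θ), β * sin θ) : ℝ × ℝ) ∈ StadiumBoundary α β := by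
        refine Or.inr ⟨?_, ?_⟩
        · show (|(-(α + β * cos θ))| - α) ^ 2 + (β * sin θ) ^ 2 = β ^ 2
          rw [abs_neg, abs_of_nonneg hx1]
          linear_combination β ^ 2 * (Real.sin_sq_add_cos_sq θ)
        · show α ≤ |(-(α + β * cos θ))|
          rw [abs_neg, abs_of_nonneg hx1]
          nlinarith
      have h1 : d.u (α + β * cos θ, β * sin θ) = 0 := d.dirichlet _ hb1
      have h2 : d.u (-(α + β * cos θ), β * sin θ) = 0 := d.dirichlet _ hb2
      dsimp only [nderiv]
      rw [h1, h2]
      ring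
  rw [eqA]
  rw [eqB, eqC, eqD] at hdiv
  linarith [hdiv]
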